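/- arXiv:2102.07151 — 2 statements merged into one kernel-verified Lean document; each statement's English description precedes it below -/
import Mathlib

section
/- Let μ₁, μ₂, ε₁, ε₂, ω ∈ ℝ with μ₂ ≠ 0, (ω+μ₁)² + μ₂² ≠ 0 and ε₁μ₁ = 2ε₂(3μ₁² - μ₂²). Define f₁(x,t) = -2iμ₁t + i(ω+μ₁)x²/((ω+μ₁)²+μ₂²) - 2x(4ε₂(μ₁³-3μ₁μ₂²) - ε₁(μ₁²-μ₂²)) and f₂(x,t) = 2μ₂t + μ₂x²/((ω+μ₁)²+μ₂²). Then the functions E(x,t) = 2μ₂ e^{f₁(x,t)} sech(f₂(x,t)), p(x,t) = (-2iμ₂ e^{f₁}/((ω+μ₁)²+μ₂²))·((ω+μ₁)sech(f₂) + iμ₂ sech(f₂)tanh(f₂))·x, η(x,t) = (1 - 2μ₂²sech²(f₂)/((ω+μ₁)²+μ₂²))·x satisfy the second Maxwell–Bloch equation p_t(x,t) = -2E(x,t)η(x,t) + 2iω p(x,t). -/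
open Complex

noncomputable def csech (z : ℂ) : ℂ := 1 / Complex.cosh z

lemma cosh_real_ne_zero' (r : ℝ) : Complex.cosh (r : ℂ) ≠ 0 := by
  rw [← Complex.ofReal_cosh]
  exact_mod_cast (Real.cosh_pos (x := r)).ne'

lemma big_hasDerivAt' (a b c d C A m x : ℂ) (t : ℝ)
    (hch : Complex.cosh (c * (t : ℂ) + d) ≠ 0) :
    HasDerivAt (fun s : ℝ => C * (Complex.exp (a * (s:ℂ) + b) *
        (A * (Complex.cosh (c * (s:ℂ) + d))⁻¹ +
          m * Complex.sinh (c * (s:ℂ) + d) * ((Complex.cosh (c * (s:ℂ) + d))⁻¹) ^ 2)) * x)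
      (C * (Complex.exp (a * (t:ℂ) + b) * a *
          (A * (Complex.cosh (c * (t:ℂ) + d))⁻¹ +
            m * Complex.sinh (c * (t:ℂ) + d) * ((Complex.cosh (c * (t:ℂ) + d))⁻¹) ^ 2)
        + Complex.exp (a * (t:ℂ) + b) *
          (A * (-(Complex.sinh (c * (t:ℂ) + d) * c) / Complex.cosh (c * (t:ℂ) + d) ^ 2) +
            (m * (Complex.cosh (c * (t:ℂ) + d) * c) * ((Complex.cosh (c * (t:ℂ) + d))⁻¹) ^ 2 +
              m * Complex.sinh (c * (t:ℂ) + d) *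
                (2 * (Complex.cosh (c * (t:ℂ) + d))⁻¹ ^ 1 *
                  (-(Complex.sinh (c * (t:ℂ) + d) * c) / Complex.cosh (c * (t:ℂ) + d) ^ 2))))) * x)
      t := by
  set z : ℂ := (t : ℂ)
  have h0 : HasDerivAt (fun w : ℂ => a * w + b) a z := by
    simpa using ((hasDerivAt_id z).const_mul a).add_const b
  have hv : HasDerivAt (fun w : ℂ => c * w + d) c z := by
    simpa using ((hasDerivAt_id z).const_mul c).add_const d
  have h1 := h0.cexp
  have h2 := hv.ccosh
  have h3 := hv.csinh
  have h4 := h2.inv hch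
  have h6 := h4.const_mul A
  have h7 := (h3.const_mul m).mul (h4.pow 2)
  have h8 := h6.add h7
  have hfull := ((h1.mul h8).const_mul C).mul_const x
  exact hfull.comp_ofReal

set_option maxHeartbeats 1000000 in
theorem focusing_one_soliton_p_equation
    (μ1 μ2 ε1 ε2 ω : ℝ) (hμ2 : μ2 ≠ 0)
    (hK : (ω + μ1) ^ 2 + μ2 ^ 2 ≠ 0)
    (hcon : ε1 * μ1 = 2 * ε2 * (3 * μ1 ^ 2 - μ2 ^ 2))
    (f1 f2 : ℝ → ℝ → ℂ) (E p η : ℝ → ℝ → ℂ)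
    (hf1 : ∀ x t : ℝ, f1 x t = -2 * Complex.I * (μ1 : ℂ) * t
        + Complex.I * ((ω : ℂ) + μ1) * x ^ 2 / (((ω : ℂ) + μ1) ^ 2 + (μ2 : ℂ) ^ 2)
        - 2 * x * (4 * (ε2 : ℂ) * ((μ1 : ℂ) ^ 3 - 3 * μ1 * (μ2 : ℂ) ^ 2)
            - (ε1 : ℂ) * ((μ1 : ℂ) ^ 2 - (μ2 : ℂ) ^ 2)))
    (hf2 : ∀ x t : ℝ, f2 x t = 2 * (μ2 : ℂ) * t
        + (μ2 : ℂ) * x ^ 2 / (((ω : ℂ) + μ1) ^ 2 + (μ2 : ℂ) ^ 2))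
    (hE : ∀ x t : ℝ, E x t = 2 * (μ2 : ℂ) * Complex.exp (f1 x t) * csech (f2 x t))
    (hp : ∀ x t : ℝ, p x t =
        (-2 * Complex.I * (μ2 : ℂ) * Complex.exp (f1 x t)
            / (((ω : ℂ) + μ1) ^ 2 + (μ2 : ℂ) ^ 2))
          * (((ω : ℂ) + μ1) * csech (f2 x t)
              + Complex.I * (μ2 : ℂ) * csech (f2 x t) * Complex.tanh (f2 x t)) * x)
    (hη : ∀ x t : ℝ, η x t =
        (1 - 2 * (μ2 : ℂ) ^ 2 * (csech (f2 x t)) ^ 2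
            / (((ω : ℂ) + μ1) ^ 2 + (μ2 : ℂ) ^ 2)) * x) :
    ∀ x t : ℝ,
      deriv (fun s => p x s) t = -2 * E x t * η x t + 2 * Complex.I * (ω : ℂ) * p x t := by
  intro x t
  set A : ℂ := (ω : ℂ) + μ1 with hA
  set K : ℂ := A ^ 2 + (μ2 : ℂ) ^ 2 with hKdef
  have hKr : K = (((ω + μ1) ^ 2 + μ2 ^ 2 : ℝ) : ℂ) := by rw [hKdef, hA]; push_cast; ring
  have hK0 : K ≠ 0 := by
    rw [hKr]; exact_mod_cast hK
  set a : ℂ := -2 * Complex.I * (μ1 : ℂ) with ha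
  set b : ℂ := Complex.I * A * (x : ℂ) ^ 2 / K
      - 2 * (x : ℂ) * (4 * (ε2 : ℂ) * ((μ1 : ℂ) ^ 3 - 3 * μ1 * (μ2 : ℂ) ^ 2)
          - (ε1 : ℂ) * ((μ1 : ℂ) ^ 2 - (μ2 : ℂ) ^ 2)) with hb
  set c : ℂ := 2 * (μ2 : ℂ) with hc
  set d : ℂ := (μ2 : ℂ) * (x : ℂ) ^ 2 / K with hd
  have ef1 : ∀ s : ℝ, f1 x s = a * (s : ℂ) + b := by
    intro s; rw [hf1, ha, hb, hKdef, hA]; ring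
  have ef2 : ∀ s : ℝ, f2 x s = c * (s : ℂ) + d := by
    intro s; rw [hf2, hc, hd, hKdef]
  have hchs : ∀ s : ℝ, Complex.cosh (c * (s : ℂ) + d) ≠ 0 := by
    intro s
    have : c * (s : ℂ) + d = ((2 * μ2 * s + μ2 * x ^ 2 / ((ω + μ1) ^ 2 + μ2 ^ 2) : ℝ) : ℂ) := by
      rw [hc, hd, hKr]; push_cast; ring
    rw [this]; exact cosh_real_ne_zero' _
  have hpf : (fun s : ℝ => p x s) = fun s : ℝ =>
      (-2 * Complex.I * (μ2 : ℂ) / K) * (Complex.exp (a * (s:ℂ) + b) *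
        (A * (Complex.cosh (c * (s:ℂ) + d))⁻¹ +
          (Complex.I * (μ2 : ℂ)) * Complex.sinh (c * (s:ℂ) + d) *
            ((Complex.cosh (c * (s:ℂ) + d))⁻¹) ^ 2)) * x := by
    funext s
    rw [hp, ef1, ef2, Complex.tanh_eq_sinh_div_cosh]
    simp only [csech]
    field_simp [hchs s]
    all_goals ring
  have hder := big_hasDerivAt' a b c d (-2 * Complex.I * (μ2 : ℂ) / K) A
      (Complex.I * (μ2 : ℂ)) (x : ℂ) t (hchs t)
  rw [hpf, hder.deriv, hE, hp, hη, ef1, ef2, Complex.tanh_eq_sinh_div_cosh]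
  simp only [csech]
  have hsq : Complex.cosh (c * (t:ℂ) + d) ^ 2 - Complex.sinh (c * (t:ℂ) + d) ^ 2 = 1 :=
    Complex.cosh_sq_sub_sinh_sq _
  set S := Complex.sinh (c * (t:ℂ) + d)
  set Cc := Complex.cosh (c * (t:ℂ) + d)
  have hCc : Cc ≠ 0 := hchs t
  have hK0' : ((ω:ℂ) + μ1) ^ 2 + (μ2:ℂ) ^ 2 ≠ 0 := by rw [← hA, ← hKdef]; exact hK0
  rw [ha, hc, hKdef, hA]
  field_simp [hCc, hK0']
  linear_combination (2 * (μ2:ℂ)^3 * (x:ℂ)) * hsq + ((μ2:ℂ) * (x:ℂ) * (((((ω:ℂ) + (μ1:ℂ))^2 - (μ2:ℂ)^2) * Cc^2 + 2 * (μ2:ℂ)^2 * S^2 + Complex.I * (μ2:ℂ) * ((ω:ℂ) + (μ1:ℂ)) * Cc * S))) * Complex.I_sq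
end

section
/- With f₁, f₂ as above (μ₂ ≠ 0, (ω+μ₁)²+μ₂² ≠ 0), the functions E(x,t) = 2μ₂ e^{f₁(x,t)} sech(f₂(x,t)), p(x,t) = (-2iμ₂ e^{f₁}/((ω+μ₁)²+μ₂²))((ω+μ₁)sech(f₂) + iμ₂ sech(f₂)tanh(f₂))·x, and η(x,t) = (1 - 2μ₂² sech²(f₂)/((ω+μ₁)²+μ₂²))·x satisfy the third Maxwell–Bloch equation η_t(x,t) = p(x,t)E*(-x,t) - p*(-x,t)E(x,t). -/
/-!
Write `S = sech f₂`, `T = tanh f₂`, `K = (ω+μ₁)² + μ₂²`. Since `f₂` is even in `x` and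
`f₁(x,t) + conj f₁(-x,t) = 0` (the `t`- and `x²`-terms of `f₁` are imaginary, its real part is odd
in `x`), the exponentials cancel in both products on the right, whose `(ω+μ₁) S²` parts then
cancel as well, leaving `8 μ₂³ S² T x / K`. Differentiating `sech² (2μ₂ t + c)` in `t` gives the
same expression for `η_t`.
-/

open Complex

open ComplexConjugate

lemma csech_ofReal (u : ℝ) : csech u = ((1 / Real.cosh u : ℝ) : ℂ) := by
  simp [csech, ← Complex.ofReal_cosh]

lemma Real.hasDerivAt_one_div_cosh_sq (u : ℝ) :
    HasDerivAt (fun s => (1 / Real.cosh s) ^ 2) (-2 * (1 / Real.cosh u) ^ 2 * Real.tanh u) u := by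
  have hu := (Real.cosh_pos u).ne'
  simp only [one_div]
  refine (((Real.hasDerivAt_cosh u).inv hu).pow 2).congr_deriv ?_
  norm_num [Real.tanh_eq_sinh_div_cosh]
  field_simp

lemma hasDerivAt_one_sub_sech_sq_mul (μ c K x t : ℝ) :
    HasDerivAt (fun s => (1 - 2 * μ ^ 2 * (1 / Real.cosh (2 * μ * s + c)) ^ 2 / K) * x)
      (8 * μ ^ 3 * (1 / Real.cosh (2 * μ * t + c)) ^ 2 * Real.tanh (2 * μ * t + c) * x / K) t := by
  have hlin : HasDerivAt (fun s : ℝ => 2 * μ * s + c) (2 * μ) t := by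
    simpa using ((hasDerivAt_id t).const_mul (2 * μ)).add_const c
  refine ((((Real.hasDerivAt_one_div_cosh_sq _).comp t hlin).const_mul (2 * μ ^ 2)
    |>.div_const K |>.const_sub 1).mul_const x).congr_deriv ?_
  ring

lemma exp_mul_conj_exp_eq_one {z w : ℂ} (h : z + conj w = 0) : exp z * conj (exp w) = 1 := by
  rw [← exp_conj, ← exp_add, h, exp_zero]

lemma soliton_polarization_cross_term (a μ K x S T : ℝ) {e e' : ℂ} (he : e * conj e' = 1) :
    (-2 * I * μ * e / K) * (a * S + I * μ * S * T) * x * conj (2 * μ * e' * S)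
      - conj ((-2 * I * μ * e' / K) * (a * S + I * μ * S * T) * (-x : ℝ)) * (2 * μ * e * S)
      = ((8 * μ ^ 3 * S ^ 2 * T * x / K : ℝ) : ℂ) := by
  simp only [map_mul, map_add, map_div₀, map_neg, map_ofNat, conj_I, conj_ofReal]
  push_cast
  linear_combination (8 * (μ : ℂ) ^ 3 * S ^ 2 * T * x / K) * he
    - (8 * (μ : ℂ) ^ 3 * S ^ 2 * T * x / K * e * conj e') * I_sq

theorem focusing_one_soliton_eta_equation_general
    (μ1 μ2 ε1 ε2 ω : ℝ)
    (f1 : ℝ → ℝ → ℂ) (f2 : ℝ → ℝ → ℝ) (E p : ℝ → ℝ → ℂ) (η : ℝ → ℝ → ℝ)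
    (hf1 : ∀ x t : ℝ, f1 x t = -2 * Complex.I * (μ1 : ℂ) * t
        + Complex.I * ((ω : ℂ) + μ1) * x ^ 2 / (((ω : ℂ) + μ1) ^ 2 + (μ2 : ℂ) ^ 2)
        - 2 * x * (4 * (ε2 : ℂ) * ((μ1 : ℂ) ^ 3 - 3 * μ1 * (μ2 : ℂ) ^ 2)
            - (ε1 : ℂ) * ((μ1 : ℂ) ^ 2 - (μ2 : ℂ) ^ 2)))
    (hf2 : ∀ x t : ℝ, f2 x t = 2 * μ2 * t + μ2 * x ^ 2 / ((ω + μ1) ^ 2 + μ2 ^ 2))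
    (hE : ∀ x t : ℝ, E x t = 2 * (μ2 : ℂ) * Complex.exp (f1 x t) * csech ((f2 x t : ℝ) : ℂ))
    (hp : ∀ x t : ℝ, p x t =
        (-2 * Complex.I * (μ2 : ℂ) * Complex.exp (f1 x t)
            / (((ω : ℂ) + μ1) ^ 2 + (μ2 : ℂ) ^ 2))
          * (((ω : ℂ) + μ1) * csech ((f2 x t : ℝ) : ℂ)
              + Complex.I * (μ2 : ℂ) * csech ((f2 x t : ℝ) : ℂ)
              * Complex.tanh ((f2 x t : ℝ) : ℂ)) * x)
    (hη : ∀ x t : ℝ, η x t =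
        (1 - 2 * μ2 ^ 2 * (1 / Real.cosh (f2 x t)) ^ 2 / ((ω + μ1) ^ 2 + μ2 ^ 2)) * x) :
    ∀ x t : ℝ,
      ((deriv (fun s => η x s) t : ℝ) : ℂ)
        = p x t * (starRingEnd ℂ) (E (-x) t) - (starRingEnd ℂ) (p (-x) t) * E x t := by
  intro x t
  set K := (ω + μ1) ^ 2 + μ2 ^ 2
  have hf2_neg : f2 (-x) t = f2 x t := by simp only [hf2, neg_sq]
  have hη_deriv : HasDerivAt (fun s => η x s)
      (8 * μ2 ^ 3 * (1 / Real.cosh (f2 x t)) ^ 2 * Real.tanh (f2 x t) * x / K) t := by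
    simp only [hη, hf2]
    exact hasDerivAt_one_sub_sech_sq_mul μ2 _ K x t
  have hexp : exp (f1 x t) * conj (exp (f1 (-x) t)) = 1 := by
    refine exp_mul_conj_exp_eq_one ?_
    simp only [hf1, map_add, map_sub, map_mul, map_div₀, map_pow, map_neg, map_ofNat,
      conj_I, conj_ofReal]
    push_cast
    ring
  have hK : ((ω : ℂ) + μ1) ^ 2 + (μ2 : ℂ) ^ 2 = ((K : ℝ) : ℂ) := by push_cast [K]; ring
  have ha : (ω : ℂ) + μ1 = ((ω + μ1 : ℝ) : ℂ) := by push_cast; ring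
  rw [hη_deriv.deriv, hp, hp, hE, hE, hf2_neg, csech_ofReal, ← ofReal_tanh, hK, ha]
  exact (soliton_polarization_cross_term _ _ _ _ _ _ hexp).symm

theorem focusing_one_soliton_eta_equation
    (μ1 μ2 ε1 ε2 ω : ℝ) (hμ2 : μ2 ≠ 0)
    (hK : (ω + μ1) ^ 2 + μ2 ^ 2 ≠ 0)
    (f1 : ℝ → ℝ → ℂ) (f2 : ℝ → ℝ → ℝ) (E p : ℝ → ℝ → ℂ) (η : ℝ → ℝ → ℝ)
    (hf1 : ∀ x t : ℝ, f1 x t = -2 * Complex.I * (μ1 : ℂ) * t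
        + Complex.I * ((ω : ℂ) + μ1) * x ^ 2 / (((ω : ℂ) + μ1) ^ 2 + (μ2 : ℂ) ^ 2)
        - 2 * x * (4 * (ε2 : ℂ) * ((μ1 : ℂ) ^ 3 - 3 * μ1 * (μ2 : ℂ) ^ 2)
            - (ε1 : ℂ) * ((μ1 : ℂ) ^ 2 - (μ2 : ℂ) ^ 2)))
    (hf2 : ∀ x t : ℝ, f2 x t = 2 * μ2 * t + μ2 * x ^ 2 / ((ω + μ1) ^ 2 + μ2 ^ 2))
    (hE : ∀ x t : ℝ, E x t = 2 * (μ2 : ℂ) * Complex.exp (f1 x t) * csech ((f2 x t : ℝ) : ℂ))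
    (hp : ∀ x t : ℝ, p x t =
        (-2 * Complex.I * (μ2 : ℂ) * Complex.exp (f1 x t)
            / (((ω : ℂ) + μ1) ^ 2 + (μ2 : ℂ) ^ 2))
          * (((ω : ℂ) + μ1) * csech ((f2 x t : ℝ) : ℂ)
              + Complex.I * (μ2 : ℂ) * csech ((f2 x t : ℝ) : ℂ)
              * Complex.tanh ((f2 x t : ℝ) : ℂ)) * x)
    (hη : ∀ x t : ℝ, η x t =
        (1 - 2 * μ2 ^ 2 * (1 / Real.cosh (f2 x t)) ^ 2 / ((ω + μ1) ^ 2 + μ2 ^ 2)) * x) :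
    ∀ x t : ℝ,
      ((deriv (fun s => η x s) t : ℝ) : ℂ)
        = p x t * (starRingEnd ℂ) (E (-x) t) - (starRingEnd ℂ) (p (-x) t) * E x t :=
  focusing_one_soliton_eta_equation_general μ1 μ2 ε1 ε2 ω f1 f2 E p η hf1 hf2 hE hp hη
end
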